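/- arXiv:2212.08425 — 4 statements merged into one kernel-verified Lean document; each statement's English description precedes it below -/
import Mathlib

section
/- Let h_k(u) be defined by h_0 = 0, h_1 = 1, h_k = h_{k−1} + u·h_{k−2}. For an integer j ≥ 3, let u_j = −1/(4 cos²(π/j)) ∈ ℝ. Then h_j(u_j) = 0. -/
/-!
Put `θ = π / j` and `c = cos θ`, so that `u_j (2c)² = -1`. Rescaling by powers of `2c` turns the
recurrence `h_{k+2} = h_{k+1} + u_j h_k` into the Chebyshev recurrence `U_{k+1} = 2c U_k - U_{k-1}`,
whence `h_{k+1}(u_j) (2c)^k = U_k(c)`. Finally `U_{j-1}(cos θ) sin θ = sin (j θ) = 0` with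
`sin θ ≠ 0`, and `c ≠ 0` because `j ≥ 3`.
-/

open Polynomial Polynomial.Chebyshev Real

theorem mul_two_mul_pow_eq_eval_U {R : Type*} [CommRing R] {a : ℕ → R} {u c : R}
    (huc : u * (2 * c) ^ 2 = -1) (h0 : a 0 = 0) (h1 : a 1 = 1)
    (hrec : ∀ n, a (n + 2) = a (n + 1) + u * a n) (n : ℕ) :
    a (n + 1) * (2 * c) ^ n = (U R n).eval c := by
  induction n using Nat.twoStepInduction with
  | zero => simp [h1]
  | one => simp [hrec, h0, h1]
  | more n ih₀ ih₁ =>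
    calc a (n + 2 + 1) * (2 * c) ^ (n + 2)
        = 2 * c * (a (n + 1 + 1) * (2 * c) ^ (n + 1))
            + u * (2 * c) ^ 2 * (a (n + 1) * (2 * c) ^ n) := by rw [hrec]; ring
      _ = (U R ↑(n + 2)).eval c := by
        rw [ih₀, ih₁, huc]
        push_cast
        rw [U_add_two]
        simp only [eval_sub, eval_mul, eval_ofNat, eval_X]
        ring

theorem eval_U_real_cos_pi_div_succ {n : ℕ} (hn : n ≠ 0) :
    (U ℝ n).eval (cos (π / (n + 1))) = 0 := by
  have hmem : cos (π / (n + 1)) ∈ (U ℝ n).roots := by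
    rw [roots_U_real, Finset.mem_val, Finset.mem_image]
    exact ⟨0, by simpa [Nat.pos_iff_ne_zero] using hn, by simp⟩
  exact isRoot_of_mem_roots hmem

theorem cos_pi_div_pos {x : ℝ} (hx : 2 < x) : 0 < cos (π / x) := by
  apply cos_pos_of_mem_Ioo
  constructor
  · linarith [pi_pos, div_pos pi_pos (by linarith : (0 : ℝ) < x)]
  · exact div_lt_div_of_pos_left pi_pos two_pos hx

theorem stmt_14 (h : ℕ → ℂ → ℂ)
    (h0 : ∀ u, h 0 u = 0) (h1 : ∀ u, h 1 u = 1)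
    (hrec : ∀ u, ∀ k, 2 ≤ k → h k u = h (k - 1) u + u * h (k - 2) u)
    (j : ℕ) (hj : 3 ≤ j) :
    h j ((-1 / (4 * Real.cos (Real.pi / j) ^ 2) : ℝ) : ℂ) = 0 := by
  obtain ⟨n, rfl⟩ : ∃ n, j = n + 1 := ⟨j - 1, by omega⟩
  rw [Nat.cast_succ]
  set c := cos (π / (n + 1))
  have hc : 0 < c := cos_pi_div_pos (by exact_mod_cast hj)
  have huc : -1 / (4 * c ^ 2) * (2 * c) ^ 2 = -1 := by
    field_simp
    norm_num
  have h2c : 2 * (c : ℂ) ≠ 0 := by exact_mod_cast (by positivity : 2 * c ≠ 0)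
  have hU := mul_two_mul_pow_eq_eval_U (a := (h · _)) (c := c)
    (u := ((-1 / (4 * c ^ 2) : ℝ) : ℂ)) (by exact_mod_cast huc)
    (h0 _) (h1 _) (fun k ↦ hrec _ (k + 2) (by omega)) n
  rw [← complex_ofReal_eval_U, eval_U_real_cos_pi_div_succ (by omega)] at hU
  exact (mul_eq_zero.mp hU).resolve_right (pow_ne_zero n h2c)
end

section
/- Let h_k(u) be defined by h_0 = 0, h_1 = 1, h_k = h_{k−1} + u·h_{k−2}, and for j ≥ 3 let u_j = −1/(4 cos²(π/j)). Then for every integer k with 1 ≤ k < j, h_k(u_j) ≠ 0. -/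
lemma sin_rec_aux (x : ℝ) (m : ℕ) :
    Real.sin (((m:ℝ)+2)*x) = 2 * Real.sin (((m:ℝ)+1)*x) * Real.cos x - Real.sin ((m:ℝ)*x) := by
  have h1 : ((m:ℝ)+2)*x = ((m:ℝ)+1)*x + x := by ring
  have h2 : (m:ℝ)*x = ((m:ℝ)+1)*x - x := by ring
  rw [h1, h2, Real.sin_add, Real.sin_sub]; ring

theorem stmt_15 (h : ℕ → ℂ → ℂ)
    (h0 : ∀ u, h 0 u = 0) (h1 : ∀ u, h 1 u = 1)
    (hrec : ∀ u, ∀ k, 2 ≤ k → h k u = h (k - 1) u + u * h (k - 2) u)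
    (j : ℕ) (hj : 3 ≤ j) :
    ∀ k, 1 ≤ k → k < j →
      h k ((-1 / (4 * Real.cos (Real.pi / j) ^ 2) : ℝ) : ℂ) ≠ 0 := by
  set θ : ℝ := Real.pi / j with hθdef
  set c : ℝ := Real.cos θ with hcdef
  have hjpos : (0:ℝ) < j := by positivity
  have hθpos : 0 < θ := by positivity
  have hθlt : θ < Real.pi / 2 := by
    rw [hθdef]
    apply div_lt_div_of_pos_left Real.pi_pos (by norm_num)
    exact_mod_cast by omega
  have hcpos : 0 < c := Real.cos_pos_of_mem_Ioo ⟨by linarith [Real.pi_pos], hθlt⟩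
  set u : ℝ := -1 / (4 * c ^ 2) with hudef
  set g : ℕ → ℝ := fun k => Real.sin (k * θ) * (2*c) ^ (j - k) with hgdef
  -- sin(kθ) > 0 for 1 ≤ k < j
  have hsin : ∀ k : ℕ, 1 ≤ k → k < j → 0 < Real.sin (k * θ) := by
    intro k hk1 hkj
    apply Real.sin_pos_of_pos_of_lt_pi
    · have : (1:ℝ) ≤ k := by exact_mod_cast hk1
      nlinarith
    · have hkr : (k:ℝ) < j := by exact_mod_cast hkj
      rw [hθdef]
      rw [mul_div_assoc']
      rw [div_lt_iff₀ hjpos] at *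
      nlinarith [Real.pi_pos]
  have hg1 : 0 < g 1 := by
    apply mul_pos
    · simpa using hsin 1 le_rfl (by omega)
    · positivity
  -- key recurrence for g
  have hgrec : ∀ m : ℕ, m + 2 ≤ j → g (m+2) = g (m+1) + u * g m := by
    intro m hm
    have e1 : j - (m+1) = (j - (m+2)) + 1 := by omega
    have e2 : j - m = (j - (m+2)) + 2 := by omega
    have key := sin_rec_aux θ m
    simp only [hgdef]
    rw [e1, e2]
    push_cast
    rw [pow_succ, pow_succ, hudef, key]
    have : c ^ 2 ≠ 0 := by positivity
    field_simp
    ring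
  -- closed form
  have hform : ∀ k : ℕ, k ≤ j →
      h k (u : ℂ) = ((g k / g 1 : ℝ) : ℂ) := by
    intro k
    induction k using Nat.strong_induction_on with
    | _ k ih =>
      match k with
      | 0 =>
        intro _
        simp [h0, hgdef]
      | 1 =>
        intro _
        rw [h1]
        rw [div_self (ne_of_gt hg1)]
        norm_num
      | (m+2) =>
        intro hk
        rw [hrec _ _ (by omega)]
        have e1 : m + 2 - 1 = m + 1 := rfl
        have e2 : m + 2 - 2 = m := rfl
        rw [e1, e2]
        rw [ih (m+1) (by omega) (by omega), ih m (by omega) (by omega)]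
        rw [hgrec m hk]
        push_cast
        ring
  intro k hk1 hkj
  rw [hform k (by omega)]
  have hgk : 0 < g k := by
    apply mul_pos (hsin k hk1 hkj)
    positivity
  simp only [ne_eq, Complex.ofReal_eq_zero]
  positivity
end

section
/- Let h_k(u) be defined by h_0 = 0, h_1 = 1, h_k = h_{k−1} + u·h_{k−2}, and for j ≥ 3 let u_j = −1/(4 cos²(π/j)). Then the derivative h_j'(u_j) is non-zero; explicitly, h_j'(u_j) = j·cos((j−1)π/j) / (2^{j−2}(1+4u_j)(cos(π/j))^{j−1}) ≠ 0. -/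
/-!
Let `α, β` be the roots of `x ^ 2 = x + u`. Binet's formula `h n (u) (α - β) = α ^ n - β ^ n`
has a companion for the derivative,
`h (n + 1)' (u) (α - β) ^ 3
  = (n + 1) (α ^ n + β ^ n) (α - β) - 2 (α ^ (n + 1) - β ^ (n + 1))`,
and both identities follow by the same two-step induction. At `u = u_j` the roots are
`e ^ (± i π / j) / (2 cos (π / j))`, so `α ^ j = β ^ j`, the last term vanishes, and
`h j' (u_j) (1 + 4 u_j) = j (α ^ (j - 1) + β ^ (j - 1))
  = 2 j cos ((j - 1) π / j) / (2 cos (π / j)) ^ (j - 1)`.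
This is nonzero since `cos ((j - 1) π / j) = -cos (π / j)`.
-/

open Polynomial
open scoped Real

section Recurrence

variable {R : Type*} [CommRing R] {h : ℕ → R[X]}

theorem eval_add_two_of_rec (hrec : ∀ k, 2 ≤ k → h k = h (k - 1) + X * h (k - 2))
    (n : ℕ) (u : R) : (h (n + 2)).eval u = (h (n + 1)).eval u + u * (h n).eval u := by
  simp [hrec (n + 2) (by omega)]

theorem derivative_add_two_of_rec (hrec : ∀ k, 2 ≤ k → h k = h (k - 1) + X * h (k - 2))
    (n : ℕ) : (h (n + 2)).derivative = (h (n + 1)).derivative + h n + X * (h n).derivative := by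
  simp [hrec (n + 2) (by omega), derivative_mul, add_assoc]

theorem sub_sq_eq_one_add_four_mul {α β u : R} (hsum : α + β = 1) (hprod : α * β = -u) :
    (α - β) ^ 2 = 1 + 4 * u := by
  linear_combination (α + β + 1) * hsum - 4 * hprod

theorem eval_mul_sub_eq_pow_sub_pow (h0 : h 0 = 0) (h1 : h 1 = 1)
    (hrec : ∀ k, 2 ≤ k → h k = h (k - 1) + X * h (k - 2)) {α β u : R}
    (hsum : α + β = 1) (hprod : α * β = -u) (n : ℕ) :
    (h n).eval u * (α - β) = α ^ n - β ^ n := by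
  induction n using Nat.twoStepInduction with
  | zero => simp [h0]
  | one => simp [h1]
  | more n ih₀ ih₁ =>
    rw [eval_add_two_of_rec hrec, add_mul, mul_assoc, ih₀, ih₁]
    linear_combination (α ^ n - β ^ n) * hprod - (α ^ (n + 1) - β ^ (n + 1)) * hsum

theorem derivative_eval_mul_sub_pow_three (h0 : h 0 = 0) (h1 : h 1 = 1)
    (hrec : ∀ k, 2 ≤ k → h k = h (k - 1) + X * h (k - 2)) {α β u : R}
    (hsum : α + β = 1) (hprod : α * β = -u) (n : ℕ) :
    (h (n + 1)).derivative.eval u * (α - β) ^ 3 =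
      (n + 1) * (α ^ n + β ^ n) * (α - β) - 2 * (α ^ (n + 1) - β ^ (n + 1)) := by
  obtain rfl : β = 1 - α := by linear_combination hsum
  obtain rfl : u = α ^ 2 - α := by linear_combination hprod
  induction n using Nat.twoStepInduction with
  | zero =>
    rw [zero_add, h1, derivative_one, eval_zero]
    ring
  | one =>
    rw [derivative_add_two_of_rec hrec 0, h1, h0]
    simp only [derivative_one, derivative_zero, mul_zero, add_zero, eval_zero]
    ring
  | more n ih₀ ih₁ =>
    have binet := eval_mul_sub_eq_pow_sub_pow h0 h1 hrec hsum hprod (n + 1)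
    rw [derivative_add_two_of_rec hrec]
    simp only [eval_add, eval_mul, eval_X]
    push_cast at ih₀ ih₁ ⊢
    linear_combination ih₁ + (α - (1 - α)) ^ 2 * binet + (α ^ 2 - α) * ih₀

theorem derivative_eval_mul_one_add_four_mul [IsDomain R] (h0 : h 0 = 0) (h1 : h 1 = 1)
    (hrec : ∀ k, 2 ≤ k → h k = h (k - 1) + X * h (k - 2)) {α β u : R}
    (hsum : α + β = 1) (hprod : α * β = -u) (hne : α ≠ β) {n : ℕ}
    (hpow : α ^ (n + 1) = β ^ (n + 1)) :
    (h (n + 1)).derivative.eval u * (1 + 4 * u) = (n + 1) * (α ^ n + β ^ n) := by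
  have key := derivative_eval_mul_sub_pow_three h0 h1 hrec hsum hprod n
  rw [hpow, sub_self, mul_zero, sub_zero, pow_succ, ← mul_assoc,
    sub_sq_eq_one_add_four_mul hsum hprod] at key
  exact mul_right_cancel₀ (sub_ne_zero.2 hne) key

end Recurrence

section ExpRoot

open Complex

/-- For `u = -1 / (4 cos² θ)` the roots of `x ^ 2 = x + u` are `expRoot (± θ)`. -/
noncomputable def expRoot (θ : ℂ) : ℂ := exp (θ * I) / (2 * cos θ)

variable {θ : ℂ}

theorem expRoot_add_expRoot_neg (hcos : cos θ ≠ 0) : expRoot θ + expRoot (-θ) = 1 := by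
  rw [expRoot, expRoot, cos_neg, ← add_div, ← two_cos,
    div_self (mul_ne_zero two_ne_zero hcos)]

theorem expRoot_mul_expRoot_neg : expRoot θ * expRoot (-θ) = 1 / (4 * cos θ ^ 2) := by
  rw [expRoot, expRoot, cos_neg, div_mul_div_comm, ← exp_add, neg_mul, add_neg_cancel, exp_zero]
  ring

theorem expRoot_pow_add_expRoot_neg_pow (n : ℕ) :
    expRoot θ ^ n + expRoot (-θ) ^ n = 2 * cos (n * θ) / (2 * cos θ) ^ n := by
  rw [expRoot, expRoot, cos_neg, div_pow, div_pow, ← add_div, ← exp_nat_mul, ← exp_nat_mul]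
  congr 1
  rw [two_cos]
  ring_nf

theorem expRoot_ne_expRoot_neg (hcos : cos θ ≠ 0) (hsin : sin θ ≠ 0) :
    expRoot θ ≠ expRoot (-θ) := by
  rw [expRoot, expRoot, cos_neg, Ne, div_left_inj' (mul_ne_zero two_ne_zero hcos)]
  intro heq
  have := two_sin θ
  rw [← heq, sub_self, zero_mul] at this
  exact hsin (by linear_combination this / 2)

theorem expRoot_pow_eq_expRoot_neg_pow {n : ℕ} (hn : n * θ = π) :
    expRoot θ ^ n = expRoot (-θ) ^ n := by
  rw [expRoot, expRoot, cos_neg, div_pow, div_pow, ← exp_nat_mul, ← exp_nat_mul, ← mul_assoc,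
    hn, neg_mul, mul_neg, ← mul_assoc, hn, exp_neg, exp_pi_mul_I, inv_neg, inv_one]

variable {h : ℕ → ℂ[X]} {u : ℂ}

theorem expRoot_mul_expRoot_neg_of_eq (hu : u = -1 / (4 * cos θ ^ 2)) :
    expRoot θ * expRoot (-θ) = -u := by
  rw [expRoot_mul_expRoot_neg, hu, neg_div, neg_neg]

theorem one_add_four_mul_ne_zero_of_cos (hcos : cos θ ≠ 0) (hsin : sin θ ≠ 0)
    (hu : u = -1 / (4 * cos θ ^ 2)) : 1 + 4 * u ≠ 0 := by
  rw [← sub_sq_eq_one_add_four_mul (expRoot_add_expRoot_neg hcos)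
    (expRoot_mul_expRoot_neg_of_eq hu)]
  exact pow_ne_zero 2 (sub_ne_zero.2 (expRoot_ne_expRoot_neg hcos hsin))

theorem derivative_eval_mul_one_add_four_mul_of_cos (h0 : h 0 = 0) (h1 : h 1 = 1)
    (hrec : ∀ k, 2 ≤ k → h k = h (k - 1) + X * h (k - 2))
    (hcos : cos θ ≠ 0) (hsin : sin θ ≠ 0)
    {n : ℕ} (hn : ((n + 1 : ℕ) : ℂ) * θ = π) (hu : u = -1 / (4 * cos θ ^ 2)) :
    (h (n + 1)).derivative.eval u * (1 + 4 * u) =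
      (n + 1) * (2 * cos (n * θ) / (2 * cos θ) ^ n) := by
  rw [derivative_eval_mul_one_add_four_mul h0 h1 hrec (expRoot_add_expRoot_neg hcos)
    (expRoot_mul_expRoot_neg_of_eq hu) (expRoot_ne_expRoot_neg hcos hsin)
    (expRoot_pow_eq_expRoot_neg_pow hn), expRoot_pow_add_expRoot_neg_pow]

theorem derivative_eval_eq_of_cos (h0 : h 0 = 0) (h1 : h 1 = 1)
    (hrec : ∀ k, 2 ≤ k → h k = h (k - 1) + X * h (k - 2))
    (hcos : cos θ ≠ 0) (hsin : sin θ ≠ 0)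
    {n : ℕ} (hn : ((n + 2 : ℕ) : ℂ) * θ = π) (hu : u = -1 / (4 * cos θ ^ 2)) :
    (h (n + 2)).derivative.eval u =
      (n + 2 : ℕ) * cos ((n + 1 : ℕ) * θ) / (2 ^ n * (1 + 4 * u) * cos θ ^ (n + 1)) := by
  have key := derivative_eval_mul_one_add_four_mul_of_cos h0 h1 hrec hcos hsin hn hu
  rw [eq_div_iff (mul_ne_zero (mul_ne_zero (pow_ne_zero _ two_ne_zero)
    (one_add_four_mul_ne_zero_of_cos hcos hsin hu)) (pow_ne_zero _ hcos))]
  field_simp at key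
  push_cast at key ⊢
  linear_combination key / 2

theorem derivative_eval_ne_zero_of_cos (h0 : h 0 = 0) (h1 : h 1 = 1)
    (hrec : ∀ k, 2 ≤ k → h k = h (k - 1) + X * h (k - 2))
    (hcos : cos θ ≠ 0) (hsin : sin θ ≠ 0)
    {n : ℕ} (hn : ((n + 1 : ℕ) : ℂ) * θ = π) (hu : u = -1 / (4 * cos θ ^ 2)) :
    (h (n + 1)).derivative.eval u ≠ 0 := by
  have hcos_n : cos (n * θ) = -cos θ := by
    rw [← cos_pi_sub]
    push_cast at hn
    congr 1
    linear_combination hn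
  refine left_ne_zero_of_mul (b := 1 + 4 * u) ?_
  rw [derivative_eval_mul_one_add_four_mul_of_cos h0 h1 hrec hcos hsin hn hu, hcos_n]
  exact mul_ne_zero (Nat.cast_add_one_ne_zero n)
    (div_ne_zero (mul_ne_zero two_ne_zero (neg_ne_zero.2 hcos))
      (pow_ne_zero _ (mul_ne_zero two_ne_zero hcos)))

end ExpRoot

theorem Real.cos_pi_div_natCast_pos {n : ℕ} (hn : 2 < n) : 0 < Real.cos (π / n) := by
  have hn' : (2 : ℝ) < n := by exact_mod_cast hn
  have hpos : 0 < π / n := div_pos Real.pi_pos (by linarith)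
  exact Real.cos_pos_of_mem_Ioo ⟨by linarith [Real.pi_pos],
    div_lt_div_of_pos_left Real.pi_pos two_pos hn'⟩

theorem Real.sin_pi_div_natCast_pos {n : ℕ} (hn : 1 < n) : 0 < Real.sin (π / n) := by
  have hn' : (1 : ℝ) < n := by exact_mod_cast hn
  exact Real.sin_pos_of_pos_of_lt_pi (div_pos Real.pi_pos (by linarith))
    (div_lt_self Real.pi_pos hn')

theorem stmt_16 (h : ℕ → Polynomial ℂ) (h0 : h 0 = 0) (h1 : h 1 = 1)
    (hrec : ∀ k, 2 ≤ k → h k = h (k - 1) + Polynomial.X * h (k - 2))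
    (j : ℕ) (hj : 3 ≤ j)
    (uj : ℂ) (huj : uj = ((-1 / (4 * Real.cos (Real.pi / j) ^ 2) : ℝ) : ℂ)) :
    (h j).derivative.eval uj =
        (j : ℂ) * ((Real.cos (((j : ℝ) - 1) * Real.pi / j) : ℝ) : ℂ) /
          (2 ^ (j - 2) * (1 + 4 * uj) * ((Real.cos (Real.pi / j) : ℝ) : ℂ) ^ (j - 1)) ∧
      (h j).derivative.eval uj ≠ 0 := by
  set θ : ℝ := π / j with hθ
  have hcos : Complex.cos θ ≠ 0 := by
    exact_mod_cast (Real.cos_pi_div_natCast_pos (by omega : 2 < j)).ne'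
  have hsin : Complex.sin θ ≠ 0 := by
    exact_mod_cast (Real.sin_pi_div_natCast_pos (by omega : 1 < j)).ne'
  have hjθ : (j : ℂ) * θ = π := by
    rw [hθ]
    push_cast
    exact mul_div_cancel₀ _ (Nat.cast_ne_zero.2 (by omega : j ≠ 0))
  have hu : uj = -1 / (4 * Complex.cos θ ^ 2) := by
    exact_mod_cast huj
  obtain ⟨m, rfl⟩ : ∃ m, j = m + 2 := ⟨j - 2, by omega⟩
  have hangle : (((m + 2 : ℕ) : ℝ) - 1) * π / (m + 2 : ℕ) = (m + 1 : ℕ) * θ := by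
    rw [hθ]
    push_cast
    ring
  rw [hangle, Complex.ofReal_cos, Complex.ofReal_cos, Complex.ofReal_mul,
    Complex.ofReal_natCast, show m + 2 - 2 = m by omega, show m + 2 - 1 = m + 1 by omega]
  exact ⟨derivative_eval_eq_of_cos h0 h1 hrec hcos hsin hjθ hu,
    derivative_eval_ne_zero_of_cos h0 h1 hrec hcos hsin hjθ hu⟩
end

section
/- Let F be a field and N a positive integer. A nilpotent matrix A ∈ M_N(F) commutes with the single Jordan block J_N if and only if A is a polynomial in J_N with zero constant term; consequently, the Jordan type of any nilpotent matrix commuting with J_N is an almost rectangular partition of N, i.e., a partition λ = (λ_1 ≥ … ≥ λ_t) with λ_1 − λ_t ≤ 1. -/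
open Matrix Polynomial Finset in
private lemma jpow_apply18 {F : Type*} [Field F] {N : ℕ} (J : Matrix (Fin N) (Fin N) F)
    (hJ : ∀ i j : Fin N, J i j = if (i:ℕ)+1 = (j:ℕ) then 1 else 0) :
    ∀ (m : ℕ) (i j : Fin N), (J^m) i j = if (i:ℕ)+m = (j:ℕ) then 1 else 0 := by
  intro m
  induction m with
  | zero =>
    intro i j
    simp [Matrix.one_apply, Fin.ext_iff, eq_comm]
  | succ m ih =>
    intro i j
    rw [pow_succ, Matrix.mul_apply]
    by_cases h : (i:ℕ) + m < N
    · rw [Finset.sum_eq_single (⟨(i:ℕ)+m, h⟩ : Fin N)]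
      · rw [ih, hJ]
        simp [add_assoc]
      · intro b _ hb
        rw [ih]
        have hne : (i:ℕ)+m ≠ (b:ℕ) := by simpa [Fin.ext_iff, eq_comm] using hb
        simp [hne]
      · simp
    · have hz : ∀ b : Fin N, (J^m) i b * J b j = 0 := by
        intro b
        rw [ih]
        have : (i:ℕ) + m ≠ (b:ℕ) := by omega
        simp [this]
      rw [Finset.sum_eq_zero (fun b _ => hz b)]
      have h2 : (i:ℕ) + m + 1 ≠ (j:ℕ) := by omega
      simp [← add_assoc, h2]
open Matrix Polynomial Finset in
private lemma toeplitz18 {F : Type*} [Field F] {N : ℕ} (hN : 0 < N)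
    (J A : Matrix (Fin N) (Fin N) F)
    (hJ : ∀ i j : Fin N, J i j = if (i:ℕ)+1 = (j:ℕ) then 1 else 0)
    (hcomm : A * J = J * A) :
    ∀ i j : Fin N, A i j =
      if h : (i:ℕ) ≤ (j:ℕ) then A ⟨0, hN⟩ ⟨(j:ℕ)-(i:ℕ), by omega⟩ else 0 := by
  have hAJ : ∀ (i j : Fin N), (A*J) i j =
      if h : 1 ≤ (j:ℕ) then A i ⟨(j:ℕ)-1, by omega⟩ else 0 := by
    intro i j
    rw [Matrix.mul_apply]
    by_cases h : 1 ≤ (j:ℕ)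
    · rw [Finset.sum_eq_single (⟨(j:ℕ)-1, by omega⟩ : Fin N)]
      · rw [hJ]
        have : ((j:ℕ)-1) + 1 = (j:ℕ) := by omega
        simp [this, h]
      · intro b _ hb
        rw [hJ]
        have : (b:ℕ) + 1 ≠ (j:ℕ) := by
          intro hc
          exact hb (by apply Fin.ext; simp; omega)
        simp [this]
      · simp
    · rw [dif_neg h]
      apply Finset.sum_eq_zero
      intro b _
      rw [hJ]
      have : (b:ℕ) + 1 ≠ (j:ℕ) := by omega
      simp [this, h]
  have hJA : ∀ (i j : Fin N), (J*A) i j =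
      if h : (i:ℕ)+1 < N then A ⟨(i:ℕ)+1, h⟩ j else 0 := by
    intro i j
    rw [Matrix.mul_apply]
    by_cases h : (i:ℕ)+1 < N
    · rw [Finset.sum_eq_single (⟨(i:ℕ)+1, h⟩ : Fin N)]
      · rw [hJ]; simp [h]
      · intro b _ hb
        rw [hJ]
        have : (i:ℕ)+1 ≠ (b:ℕ) := by simpa [Fin.ext_iff, eq_comm] using hb
        simp [this]
      · simp
    · rw [dif_neg h]
      apply Finset.sum_eq_zero
      intro b _
      rw [hJ]
      have : (i:ℕ)+1 ≠ (b:ℕ) := by omega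
      simp [this, h]
  have key : ∀ (n : ℕ) (hn : n < N) (j : Fin N), A ⟨n, hn⟩ j =
      if h : n ≤ (j:ℕ) then A ⟨0, hN⟩ ⟨(j:ℕ)-n, by omega⟩ else 0 := by
    intro n
    induction n with
    | zero =>
      intro hn j
      simp only [Nat.zero_le, dif_pos]
      congr 1
    | succ n ih =>
      intro hn j
      have h1 : A ⟨n+1, hn⟩ j = (A*J) ⟨n, by omega⟩ j := by
        rw [hcomm, hJA]
        simp only [Fin.val_mk]
        rw [dif_pos hn]
      rw [h1, hAJ]
      by_cases hj : 1 ≤ (j:ℕ)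
      · rw [dif_pos hj, ih (by omega)]
        by_cases h2 : n + 1 ≤ (j:ℕ)
        · rw [dif_pos (show n ≤ (j:ℕ)-1 by omega), dif_pos h2]
          congr 1
          apply Fin.ext
          simp
          omega
        · rw [dif_neg (show ¬ n ≤ (j:ℕ)-1 by omega), dif_neg h2]
      · rw [dif_neg hj, dif_neg (by omega)]
  intro i j
  have : A i j = A ⟨(i:ℕ), i.isLt⟩ j := by congr 1
  rw [this, key]
open Matrix Polynomial Finset in
private lemma sumrepr18 {F : Type*} [Field F] {N : ℕ} (hN : 0 < N)
    (J A : Matrix (Fin N) (Fin N) F)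
    (hJ : ∀ i j : Fin N, J i j = if (i:ℕ)+1 = (j:ℕ) then 1 else 0)
    (hcomm : A * J = J * A) :
    A = ∑ m ∈ Finset.range N,
      (if h : m < N then A ⟨0, hN⟩ ⟨m, h⟩ else 0) • J^m := by
  have hT := toeplitz18 hN J A hJ hcomm
  have hP := jpow_apply18 J hJ
  ext i j
  rw [hT i j]
  simp only [Matrix.sum_apply, Matrix.smul_apply, hP, smul_eq_mul, mul_ite, mul_one, mul_zero]
  by_cases h : (i:ℕ) ≤ (j:ℕ)
  · rw [dif_pos h, Finset.sum_eq_single ((j:ℕ)-(i:ℕ))]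
    · rw [if_pos (by omega), dif_pos (by omega)]
    · intro b _ hb
      rw [if_neg (by omega)]
    · intro hb
      exact absurd (Finset.mem_range.mpr (by omega)) hb
  · rw [dif_neg h]
    refine (Finset.sum_eq_zero ?_).symm
    intro b _
    rw [if_neg (by omega)]
open Matrix Polynomial Finset in
private lemma jpowrank18 {F : Type*} [Field F] {N : ℕ} (hN : 0 < N)
    (J : Matrix (Fin N) (Fin N) F)
    (hJ : ∀ i j : Fin N, J i j = if (i:ℕ)+1 = (j:ℕ) then 1 else 0) :
    (J^N = 0) ∧ ∀ m : ℕ, (J^m).rank = N - m := by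
  classical
  have hP := jpow_apply18 J hJ
  have hJN : J^N = 0 := by
    ext i j
    rw [hP]
    have : (i:ℕ) + N ≠ (j:ℕ) := by omega
    simp [this]
  refine ⟨hJN, fun m => ?_⟩
  by_cases hm : m < N
  · haveI : NeZero N := ⟨by omega⟩
    set σ : Fin N ≃ Fin N := Equiv.addRight (⟨m, hm⟩ : Fin N) with hσ
    set D : Matrix (Fin N) (Fin N) F :=
      Matrix.diagonal (fun j : Fin N => if m ≤ (j:ℕ) then (1:F) else 0) with hD
    have heq : J^m = D.submatrix σ id := by
      ext i j
      rw [hP, Matrix.submatrix_apply, hD, Matrix.diagonal_apply]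
      simp only [id_eq]
      have hv : ((σ i : Fin N) : ℕ) = ((i:ℕ) + m) % N := by
        simp [hσ, Fin.val_add]
      by_cases hij : (i:ℕ) + m = (j:ℕ)
      · have h1 : σ i = j := by
          apply Fin.ext
          rw [hv, hij, Nat.mod_eq_of_lt j.isLt]
        rw [if_pos hij, if_pos h1, h1, if_pos (by omega)]
      · rw [if_neg hij]
        by_cases h1 : σ i = j
        · have hv2 : ((i:ℕ) + m) % N = (j:ℕ) := by rw [← hv, h1]
          have hlt : (i:ℕ) + m < 2 * N := by omega
          have hge : N ≤ (i:ℕ) + m := by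
            by_contra hc
            rw [Nat.mod_eq_of_lt (by omega)] at hv2
            exact hij hv2
          have : ((i:ℕ) + m) % N = (i:ℕ) + m - N := by
            rw [Nat.mod_eq_sub_mod hge, Nat.mod_eq_of_lt (by omega)]
          have hjm : ¬ m ≤ (j:ℕ) := by omega
          rw [if_pos h1, h1, if_neg hjm]
        · rw [if_neg h1]
    rw [heq]
    have hr : (D.submatrix σ (Equiv.refl (Fin N))).rank = D.rank :=
      Matrix.rank_submatrix D σ (Equiv.refl _)
    simp only [Equiv.coe_refl] at hr
    rw [hr, hD, Matrix.rank_diagonal]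
    have hiff : ∀ j : Fin N, ((if m ≤ (j:ℕ) then (1:F) else 0) ≠ 0) ↔ (⟨m, hm⟩ : Fin N) ≤ j := by
      intro j
      rw [Fin.le_def]
      split <;> simp_all
    rw [Fintype.card_subtype]
    rw [show (Finset.univ.filter fun j : Fin N => (if m ≤ (j:ℕ) then (1:F) else 0) ≠ 0)
        = Finset.Ici (⟨m, hm⟩ : Fin N) by
      ext j
      simp [hiff j, Fin.le_def]]
    exact Fin.card_Ici _
  · have : J^m = 0 := by
      rw [show m = N + (m - N) by omega, pow_add, hJN, zero_mul]
    rw [this, Matrix.rank_zero]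
    omega
open Matrix Polynomial Finset in
private lemma nilsum18 {F : Type*} [Field F] {N : ℕ}
    (J : Matrix (Fin N) (Fin N) F) (hJN : J^N = 0) (f : ℕ → F) :
    IsNilpotent (∑ m ∈ Finset.Ico 1 N, f m • J^m) := by
  apply Commute.isNilpotent_sum
  · intro m hm
    rw [Finset.mem_Ico] at hm
    refine ⟨N, ?_⟩
    rw [_root_.smul_pow, ← pow_mul, show m * N = N + (m * N - N) by
      have := Nat.le_mul_of_pos_left N hm.1
      omega, pow_add, hJN, zero_mul, smul_zero]
  · intro a b _ _
    exact (((Commute.refl J).pow_pow _ _).smul_left _).smul_right _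

open Matrix Polynomial Finset in
private lemma czero18 {F : Type*} [Field F] {N : ℕ} (hN : 0 < N)
    (J A : Matrix (Fin N) (Fin N) F) (hJN : J^N = 0)
    (hAnil : IsNilpotent A) (c : ℕ → F)
    (hrepr : A = ∑ m ∈ Finset.range N, c m • J^m) : c 0 = 0 := by
  set B : Matrix (Fin N) (Fin N) F := ∑ m ∈ Finset.Ico 1 N, c m • J^m with hB
  have hsplit : A = c 0 • 1 + B := by
    rw [hrepr, Finset.range_eq_Ico, Finset.sum_eq_sum_Ico_succ_bot hN]
    simp [hB]
  have hBnil : IsNilpotent B := nilsum18 J hJN c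
  have hcom : Commute A B := by
    rw [hsplit]
    exact ((Commute.one_left B).smul_left _).add_left (Commute.refl B)
  obtain ⟨n, hn⟩ := hcom.isNilpotent_sub hAnil hBnil
  have hAB : A - B = c 0 • 1 := by rw [hsplit]; abel
  rw [hAB, _root_.smul_pow] at hn
  have hcn : (c 0)^n = 0 := by
    have := congrFun (congrFun hn ⟨0, hN⟩) ⟨0, hN⟩
    simpa [Matrix.one_apply] using this
  cases n with
  | zero => simp at hcn
  | succ n => exact pow_eq_zero_iff (Nat.succ_ne_zero n) |>.mp hcn
theorem stmt_18 (F : Type*) [Field F] (N : ℕ) (hN : 0 < N)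
    (J : Matrix (Fin N) (Fin N) F)
    (hJ : J = Matrix.of fun (i j : Fin N) => if (i : ℕ) + 1 = (j : ℕ) then 1 else 0)
    (A : Matrix (Fin N) (Fin N) F) (hAnil : IsNilpotent A) :
    (A * J = J * A ↔
      ∃ p : Polynomial F, p.coeff 0 = 0 ∧ A = Polynomial.aeval J p) ∧
    (A * J = J * A →
      ∃ P : Multiset ℕ,
        (∀ x ∈ P, 0 < x) ∧ P.sum = N ∧
        (∀ a ∈ P, ∀ b ∈ P, a ≤ b + 1) ∧
        ∀ k : ℕ, (A ^ k).rank = (P.map (fun p => p - k)).sum) := by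
  classical
  have hJe : ∀ i j : Fin N, J i j = if (i:ℕ)+1 = (j:ℕ) then 1 else 0 := by
    intro i j; rw [hJ]; rfl
  obtain ⟨hJN, hrank⟩ := jpowrank18 hN J hJe
  set c : ℕ → F := fun m => if h : m < N then A ⟨0, hN⟩ ⟨m, h⟩ else 0 with hc
  have hczero : ∀ m, N ≤ m → c m = 0 := fun m hm => dif_neg (by omega)
  constructor
  · constructor
    · intro hcomm
      have hrepr : A = ∑ m ∈ Finset.range N, c m • J^m := sumrepr18 hN J A hJe hcomm
      have hc0 : c 0 = 0 := czero18 hN J A hJN hAnil c hrepr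
      refine ⟨∑ m ∈ Finset.range N, Polynomial.monomial m (c m), ?_, ?_⟩
      · rw [Polynomial.finset_sum_coeff, Finset.sum_eq_single 0]
        · simpa [Polynomial.coeff_monomial] using hc0
        · intro b _ hb
          simp [Polynomial.coeff_monomial, hb]
        · intro h
          exact absurd (Finset.mem_range.mpr hN) h
      · rw [map_sum, hrepr]
        refine Finset.sum_congr rfl fun m _ => ?_
        simp [Polynomial.aeval_monomial, Algebra.smul_def]
    · rintro ⟨p, hp0, rfl⟩
      calc (Polynomial.aeval J) p * J = Polynomial.aeval J (p * Polynomial.X) := by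
              rw [map_mul, Polynomial.aeval_X]
        _ = Polynomial.aeval J (Polynomial.X * p) := by rw [mul_comm]
        _ = J * (Polynomial.aeval J) p := by rw [map_mul, Polynomial.aeval_X]
  · intro hcomm
    have hrepr : A = ∑ m ∈ Finset.range N, c m • J^m := sumrepr18 hN J A hJe hcomm
    have hc0 : c 0 = 0 := czero18 hN J A hJN hAnil c hrepr
    by_cases hex : ∃ m, c m ≠ 0
    · set d := Nat.find hex with hd
      have hcd : c d ≠ 0 := Nat.find_spec hex
      have hdmin : ∀ m, m < d → c m = 0 := fun m hm => by
        simpa using Nat.find_min hex hm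
      have hdN : d < N := by
        by_contra hcon
        exact hcd (hczero d (by omega))
      have hd1 : 1 ≤ d := by
        rcases Nat.eq_zero_or_pos d with h | h
        · exact absurd (h ▸ hcd) (by simp [hc0])
        · exact h
      set u : Matrix (Fin N) (Fin N) F := ∑ m ∈ Finset.range N, c (d+m) • J^m with hu
      have hAdu : A = J^d * u := by
        have h1 : J^d * u = ∑ i ∈ Finset.Ico d (d+N), c i • J^i := by
          rw [hu, Finset.mul_sum, Finset.sum_Ico_eq_sum_range]
          simp only [add_tsub_cancel_left]
          refine Finset.sum_congr rfl fun m _ => ?_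
          rw [Matrix.mul_smul, ← pow_add]
        have h2 : ∑ i ∈ Finset.Ico d (d+N), c i • J^i
            = ∑ i ∈ Finset.range (d+N), c i • J^i := by
          apply Finset.sum_subset
          · intro x hx
            rw [Finset.mem_Ico] at hx
            exact Finset.mem_range.mpr (by omega)
          · intro x hx hnx
            rw [Finset.mem_range] at hx
            rw [Finset.mem_Ico] at hnx
            rw [hdmin x (by omega), zero_smul]
        have h3 : A = ∑ i ∈ Finset.range (d+N), c i • J^i := by
          rw [hrepr]
          apply Finset.sum_subset
          · intro x hx
            rw [Finset.mem_range] at hx ⊢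
            omega
          · intro x hx hnx
            rw [Finset.mem_range] at hx hnx
            rw [hczero x (by omega), zero_smul]
        rw [h1, h2, ← h3]
      have hcommJu : Commute (J^d) u :=
        Commute.sum_right _ _ _ fun m _ => ((Commute.refl J).pow_pow d m).smul_right _
      have hun : IsUnit u := by
        have hsplitu : u = c d • 1 + ∑ m ∈ Finset.Ico 1 N, c (d+m) • J^m := by
          rw [hu, Finset.range_eq_Ico, Finset.sum_eq_sum_Ico_succ_bot hN]
          simp
        have hnil2 : IsNilpotent (∑ m ∈ Finset.Ico 1 N, c (d+m) • J^m) :=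
          nilsum18 J hJN _
        have hu1 : IsUnit (c d • (1 : Matrix (Fin N) (Fin N) F)) := by
          refine ⟨⟨c d • 1, (c d)⁻¹ • 1, ?_, ?_⟩, rfl⟩
          · rw [Matrix.smul_mul, Matrix.mul_smul, smul_smul, mul_inv_cancel₀ hcd, one_smul, one_mul]
          · rw [Matrix.smul_mul, Matrix.mul_smul, smul_smul, inv_mul_cancel₀ hcd, one_smul, one_mul]
        rw [hsplitu]
        exact hnil2.isUnit_add_left_of_commute hu1
          (Commute.sum_left _ _ _ fun m _ =>
            ((Commute.one_right _).smul_right _).smul_left _)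
      have hrk : ∀ k, (A^k).rank = N - d*k := by
        intro k
        have hpow : A^k = J^(d*k) * u^k := by
          rw [hAdu, hcommJu.mul_pow, ← pow_mul]
        rw [hpow, Matrix.rank_mul_eq_left_of_isUnit_det _ _
          ((Matrix.isUnit_iff_isUnit_det _).mp (hun.pow k)), hrank]
      obtain ⟨q, r, hqr, hrd⟩ : ∃ q r, d*q + r = N ∧ r < d :=
        ⟨N/d, N%d, Nat.div_add_mod N d, Nat.mod_lt _ (by omega)⟩
      have hq1 : 1 ≤ q := by
        rcases Nat.eq_zero_or_pos q with h | h
        · subst h; simp at hqr; omega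
        · exact h
      refine ⟨Multiset.replicate r (q+1) + Multiset.replicate (d-r) q, ?_, ?_, ?_, ?_⟩
      · intro x hx
        rcases Multiset.mem_add.mp hx with h | h <;>
          rw [Multiset.eq_of_mem_replicate h] <;> omega
      · rw [Multiset.sum_add]
        simp only [Multiset.sum_replicate, smul_eq_mul]
        have e1 : (d-r)*q = d*q - r*q := Nat.sub_mul d r q
        have e2 : r*q ≤ d*q := Nat.mul_le_mul_right q hrd.le
        have e3 : r*(q+1) = r*q + r := by rw [Nat.mul_add, Nat.mul_one]
        omega
      · intro a ha b hb
        rcases Multiset.mem_add.mp ha with h | h <;>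
          rcases Multiset.mem_add.mp hb with h2 | h2 <;>
          rw [Multiset.eq_of_mem_replicate h, Multiset.eq_of_mem_replicate h2] <;> omega
      · intro k
        rw [hrk k, Multiset.map_add, Multiset.sum_add]
        simp only [Multiset.map_replicate, Multiset.sum_replicate, smul_eq_mul]
        rcases le_or_gt k q with hk | hk
        · obtain ⟨s, hs⟩ : ∃ s, q = k + s := ⟨q - k, by omega⟩
          subst hs
          rw [show k + s + 1 - k = s + 1 by omega, show k + s - k = s by omega]
          have e1 : d*(k+s) = d*k + d*s := Nat.mul_add d k s
          have e3 : r*(s+1) = r*s + r := by rw [Nat.mul_add, Nat.mul_one]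
          have e4 : (d-r)*s = d*s - r*s := Nat.sub_mul d r s
          have e5 : r*s ≤ d*s := Nat.mul_le_mul_right s hrd.le
          omega
        · rw [show q + 1 - k = 0 by omega, show q - k = 0 by omega]
          have h3 : d*(q+1) ≤ d*k := Nat.mul_le_mul_left d hk
          have h4 : d*(q+1) = d*q + d := by rw [Nat.mul_add, Nat.mul_one]
          simp only [Nat.mul_zero, Nat.add_zero]
          omega
    · push_neg at hex
      have hA0 : A = 0 := by
        rw [hrepr]
        exact Finset.sum_eq_zero fun m _ => by rw [hex m, zero_smul]
      refine ⟨Multiset.replicate N 1, ?_, ?_, ?_, ?_⟩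
      · intro x hx
        rw [Multiset.eq_of_mem_replicate hx]
        norm_num
      · simp [Multiset.sum_replicate]
      · intro a ha b hb
        rw [Multiset.eq_of_mem_replicate ha, Multiset.eq_of_mem_replicate hb]
        omega
      · intro k
        cases k with
        | zero =>
          simp [Matrix.rank_one, Multiset.map_replicate, Multiset.sum_replicate]
        | succ k =>
          rw [hA0, zero_pow (Nat.succ_ne_zero k), Matrix.rank_zero]
          simp [Multiset.map_replicate, Multiset.sum_replicate]
end
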